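/- For λ, a, b ∈ ℂ with λ ≠ 0, the operator identity x + a(1 + λθ) + b(2 + λθ)D = (1 + λaD + λbD²)^{1/λ} ∘ x ∘ (1 + λaD + λbD²)^{1 - 1/λ} holds on ℂ[x], where θ = xD. -/

import Mathlib

open Polynomial

/-- The operator `g(D)` on `ℂ[x]`. -/
noncomputable def opSubst (g : PowerSeries ℂ) (p : Polynomial ℂ) : Polynomial ℂ :=
  ∑ k ∈ Finset.range (p.natDegree + 1),
    (PowerSeries.coeff k g) • (Polynomial.derivative^[k] p)

/-- `u = g^α` for `g ∈ 1 + yℂ[[y]]`: the binomial-series power, characterized by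
constant term `1` and the logarithmic-derivative equation `u' g = α g' u`. -/
def IsFPow (g : PowerSeries ℂ) (α : ℂ) (u : PowerSeries ℂ) : Prop :=
  PowerSeries.coeff 0 u = 1 ∧
    PowerSeries.derivativeFun u * g = α • (PowerSeries.derivativeFun g * u)

namespace ShefferAux

open Finset

lemma coeff_derivativeFun' (f : PowerSeries ℂ) (n : ℕ) :
    PowerSeries.coeff n (PowerSeries.derivativeFun f) = PowerSeries.coeff (n + 1) f * (n + 1) :=
  PowerSeries.coeff_derivative f n

noncomputable def Dop : Module.End ℂ (Polynomial ℂ) := Polynomial.derivative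

lemma Dop_pow_apply (k : ℕ) (p : Polynomial ℂ) : (Dop ^ k) p = Polynomial.derivative^[k] p := by
  rw [Module.End.pow_apply]; rfl

lemma aevalD_eq (P : Polynomial ℂ) (p : Polynomial ℂ) {N : ℕ} (h : p.natDegree < N) :
    Polynomial.aeval Dop P p = ∑ k ∈ Finset.range N, P.coeff k • Polynomial.derivative^[k] p := by
  have hPM : P.natDegree < max (P.natDegree + 1) N :=
    lt_of_lt_of_le (Nat.lt_succ_self _) (le_max_left _ _)
  rw [Polynomial.aeval_eq_sum_range' hPM Dop]
  rw [LinearMap.sum_apply]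
  rw [Finset.sum_subset (Finset.range_subset_range.mpr (le_max_right (P.natDegree + 1) N))]
  · exact Finset.sum_congr rfl fun k _ => by rw [LinearMap.smul_apply, Dop_pow_apply]
  · intro k _ hk
    rw [Finset.mem_range, not_lt] at hk
    rw [Polynomial.iterate_derivative_eq_zero (lt_of_lt_of_le h hk), smul_zero]

lemma opSubst_eq_sum (u : PowerSeries ℂ) (p : Polynomial ℂ) {N : ℕ} (h : p.natDegree < N) :
    opSubst u p = ∑ k ∈ Finset.range N, (PowerSeries.coeff k u) • Polynomial.derivative^[k] p := by
  unfold opSubst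
  refine Finset.sum_subset (Finset.range_subset_range.mpr h) ?_
  intro k _ hk
  rw [Finset.mem_range, not_lt] at hk
  rw [Polynomial.iterate_derivative_eq_zero (Nat.lt_of_succ_le hk), smul_zero]

lemma opSubst_eq_aevalD (u : PowerSeries ℂ) (p : Polynomial ℂ) {N : ℕ} (h : p.natDegree < N) :
    opSubst u p = Polynomial.aeval Dop (PowerSeries.trunc N u) p := by
  rw [aevalD_eq _ p h, opSubst_eq_sum u p h]
  refine Finset.sum_congr rfl fun k hk => ?_
  rw [PowerSeries.coeff_trunc, if_pos (Finset.mem_range.mp hk)]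

lemma natDegree_opSubst_le (u : PowerSeries ℂ) (p : Polynomial ℂ) :
    (opSubst u p).natDegree ≤ p.natDegree := by
  unfold opSubst
  refine Polynomial.natDegree_sum_le_of_forall_le _ _ fun k _ => ?_
  refine le_trans (Polynomial.natDegree_smul_le _ _) ?_
  exact le_trans (Polynomial.natDegree_iterate_derivative _ _) (Nat.sub_le _ _)

lemma opSubst_mul (u v : PowerSeries ℂ) (p : Polynomial ℂ) :
    opSubst u (opSubst v p) = opSubst (u * v) p := by
  have hNp : p.natDegree < p.natDegree + 1 := Nat.lt_succ_self _
  have hq : (opSubst v p).natDegree < p.natDegree + 1 :=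
    Nat.lt_succ_of_le (natDegree_opSubst_le v p)
  rw [opSubst_eq_aevalD u _ hq, opSubst_eq_aevalD v p hNp, ← Module.End.mul_apply, ← map_mul]
  rw [aevalD_eq _ p hNp, opSubst_eq_sum (u * v) p hNp]
  refine Finset.sum_congr rfl fun k hk => ?_
  congr 1
  rw [PowerSeries.coeff_mul_eq_coeff_trunc_mul_trunc u v (Finset.mem_range.mp hk),
    ← Polynomial.coe_mul, Polynomial.coeff_coe]

lemma opSubst_smul (c : ℂ) (f : PowerSeries ℂ) (p : Polynomial ℂ) :
    opSubst (c • f) p = c • opSubst f p := by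
  unfold opSubst
  rw [Finset.smul_sum]
  refine Finset.sum_congr rfl fun k _ => ?_
  rw [map_smul, smul_assoc]

lemma iterate_derivative_X_mul (p : Polynomial ℂ) : ∀ k : ℕ,
    Polynomial.derivative^[k + 1] (Polynomial.X * p) =
      Polynomial.X * Polynomial.derivative^[k + 1] p +
        ((k : ℂ) + 1) • Polynomial.derivative^[k] p := by
  intro k
  induction k with
  | zero =>
    simp only [zero_add, Function.iterate_one, Function.iterate_zero_apply,
      Polynomial.derivative_mul, Polynomial.derivative_X, one_mul, one_smul,
      Nat.cast_zero]
    ring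
  | succ k ih =>
    rw [Function.iterate_succ_apply' Polynomial.derivative (k + 1) (Polynomial.X * p), ih]
    rw [Polynomial.derivative_add, Polynomial.derivative_mul, Polynomial.derivative_X,
      Polynomial.derivative_smul]
    rw [← Function.iterate_succ_apply' Polynomial.derivative (k + 1) p,
      ← Function.iterate_succ_apply' Polynomial.derivative k p]
    push_cast
    rw [one_mul]
    module

lemma opSubst_commX (u : PowerSeries ℂ) (p : Polynomial ℂ) :
    opSubst u (Polynomial.X * p) =
      Polynomial.X * opSubst u p + opSubst (PowerSeries.derivativeFun u) p := by
  have hXp : (Polynomial.X * p).natDegree < p.natDegree + 1 + 1 := by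
    have h1 := Polynomial.natDegree_mul_le (p := (Polynomial.X : Polynomial ℂ)) (q := p)
    have h2 := Polynomial.natDegree_X_le (R := ℂ)
    omega
  have hterm : ∀ k : ℕ,
      (PowerSeries.coeff (k + 1) u) • Polynomial.derivative^[k + 1] (Polynomial.X * p) =
        Polynomial.X * ((PowerSeries.coeff (k + 1) u) • Polynomial.derivative^[k + 1] p) +
          (PowerSeries.coeff k (PowerSeries.derivativeFun u)) •
            Polynomial.derivative^[k] p := by
    intro k
    rw [iterate_derivative_X_mul p k, smul_add, smul_smul, ShefferAux.coeff_derivativeFun',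
      mul_smul_comm]
  rw [opSubst_eq_sum u (Polynomial.X * p) hXp, Finset.sum_range_succ']
  rw [opSubst_eq_sum u p (show p.natDegree < p.natDegree + 1 + 1 by omega),
    opSubst_eq_sum (PowerSeries.derivativeFun u) p (Nat.lt_succ_self _)]
  rw [Finset.mul_sum, Finset.sum_range_succ'
    (fun k => Polynomial.X * ((PowerSeries.coeff k u) • Polynomial.derivative^[k] p))]
  rw [Finset.sum_congr rfl (fun k _ => hterm k), Finset.sum_add_distrib]
  simp only [Function.iterate_zero_apply, mul_smul_comm]
  ring

lemma opSubst_of_coeffs (f : PowerSeries ℂ) (c0 c1 c2 : ℂ)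
    (h0 : PowerSeries.coeff 0 f = c0) (h1 : PowerSeries.coeff 1 f = c1)
    (h2 : PowerSeries.coeff 2 f = c2) (h3 : ∀ k, 3 ≤ k → PowerSeries.coeff k f = 0)
    (p : Polynomial ℂ) :
    opSubst f p = c0 • p + c1 • Polynomial.derivative p +
      c2 • Polynomial.derivative (Polynomial.derivative p) := by
  rw [opSubst_eq_sum f p (show p.natDegree < p.natDegree + 3 by omega)]
  have hsub : ∑ k ∈ Finset.range 3, (PowerSeries.coeff k f) • Polynomial.derivative^[k] p =
      ∑ k ∈ Finset.range (p.natDegree + 3),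
        (PowerSeries.coeff k f) • Polynomial.derivative^[k] p := by
    refine Finset.sum_subset (Finset.range_subset_range.mpr (by omega)) ?_
    intro k _ hk
    rw [Finset.mem_range, not_lt] at hk
    rw [h3 k hk, zero_smul]
  rw [← hsub, Finset.sum_range_succ, Finset.sum_range_succ, Finset.sum_range_succ,
    Finset.sum_range_zero, h0, h1, h2]
  simp [Function.iterate_succ_apply, Function.iterate_one]

lemma eq_one_of_deriv_zero (t : PowerSeries ℂ) (h : PowerSeries.derivativeFun t = 0)
    (h0 : PowerSeries.constantCoeff t = 1) : t = 1 := by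
  ext n
  cases n with
  | zero =>
    rw [PowerSeries.coeff_zero_eq_constantCoeff_apply, h0]
    simp
  | succ n =>
    have h1 := congrArg (PowerSeries.coeff n) h
    rw [ShefferAux.coeff_derivativeFun', map_zero] at h1
    have hn : ((n : ℂ) + 1) ≠ 0 := by
      have h' := Nat.cast_ne_zero (R := ℂ).mpr (Nat.succ_ne_zero n)
      push_cast at h'
      exact h'
    have h2 : PowerSeries.coeff (n + 1) t = 0 := by
      rcases mul_eq_zero.mp h1 with h' | h'
      · exact h'
      · exact absurd (by push_cast at h' ⊢; exact h') hn
    rw [h2, PowerSeries.coeff_one, if_neg (Nat.succ_ne_zero n)]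

end ShefferAux

/-- `x + a(1+λθ) + b(2+λθ)D = (1+λaD+λbD²)^{1/λ} ∘ x ∘ (1+λaD+λbD²)^{1-1/λ}` on `ℂ[x]`. -/
theorem sheffer_factorization (lam a b : ℂ) (hlam : lam ≠ 0)
    (g : PowerSeries ℂ)
    (hg : g = 1 + (PowerSeries.monomial 1) (lam * a) + (PowerSeries.monomial 2) (lam * b))
    (u v : PowerSeries ℂ)
    (hu : IsFPow g (1 / lam) u) (hv : IsFPow g (1 - 1 / lam) v)
    (p : Polynomial ℂ) :
    X * p + a • (p + lam • (X * derivative p)) +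
        b • ((2 : ℂ) • derivative p + lam • (X * derivative (derivative p))) =
      opSubst u (X * opSubst v p) := by
  obtain ⟨hu0, hu'⟩ := hu
  obtain ⟨hv0, hv'⟩ := hv
  rw [PowerSeries.smul_eq_C_mul] at hu' hv'
  have hc : ∀ k : ℕ, PowerSeries.coeff k g =
      if k = 0 then 1 else if k = 1 then lam * a else if k = 2 then lam * b else 0 := by
    intro k
    rw [hg]
    simp only [map_add, PowerSeries.coeff_one, PowerSeries.coeff_monomial]
    rcases Nat.lt_or_ge k 3 with h | h
    · interval_cases k <;> norm_num
    · have h0 : k ≠ 0 := by omega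
      have h1 : k ≠ 1 := by omega
      have h2 : k ≠ 2 := by omega
      simp [h0, h1, h2]
  have hg0 : PowerSeries.constantCoeff g = 1 := by
    rw [← PowerSeries.coeff_zero_eq_constantCoeff_apply, hc]
    norm_num
  have hgne : g ≠ 0 := by
    intro h
    rw [h, map_zero] at hg0
    exact zero_ne_one hg0
  have hinv : g * g⁻¹ = 1 := PowerSeries.mul_inv_cancel g (by rw [hg0]; exact one_ne_zero)
  have hinv' : g⁻¹ * g = 1 := PowerSeries.inv_mul_cancel g (by rw [hg0]; exact one_ne_zero)
  have hdinv : PowerSeries.derivativeFun g⁻¹ = -g⁻¹ ^ 2 * PowerSeries.derivativeFun g :=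
    PowerSeries.derivative_inv' g
  -- (uv)' g = g' (uv)
  have hw : PowerSeries.derivativeFun (u * v) * g =
      PowerSeries.derivativeFun g * (u * v) := by
    have hC : (PowerSeries.C (1 / lam)) + PowerSeries.C (1 - 1 / lam) = 1 := by
      rw [← map_add]
      norm_num
    rw [PowerSeries.derivativeFun_mul]
    simp only [smul_eq_mul]
    linear_combination v * hu' + u * hv' + (PowerSeries.derivativeFun g * u * v) * hC
  -- (u v g⁻¹)' = 0
  have hzero : PowerSeries.derivativeFun (u * v * g⁻¹) * (g * g) = 0 := by
    rw [PowerSeries.derivativeFun_mul, hdinv]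
    simp only [smul_eq_mul]
    linear_combination (g⁻¹ * g) * hw +
      (-(PowerSeries.derivativeFun g * (u * v) * g⁻¹ * g)) * hinv
  have hdz : PowerSeries.derivativeFun (u * v * g⁻¹) = 0 :=
    (mul_eq_zero.mp hzero).resolve_right (mul_ne_zero hgne hgne)
  have ht0 : PowerSeries.constantCoeff (u * v * g⁻¹) = 1 := by
    rw [map_mul, map_mul, PowerSeries.constantCoeff_inv, hg0,
      ← PowerSeries.coeff_zero_eq_constantCoeff_apply,
      ← PowerSeries.coeff_zero_eq_constantCoeff_apply, hu0, hv0]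
    norm_num
  have huvg : u * v = g := by
    have h1 : u * v * g⁻¹ = 1 := ShefferAux.eq_one_of_deriv_zero _ hdz ht0
    calc u * v = u * v * (g⁻¹ * g) := by rw [hinv', mul_one]
      _ = (u * v * g⁻¹) * g := by ring
      _ = g := by rw [h1, one_mul]
  have huv' : PowerSeries.derivativeFun u * v = (1 / lam) • PowerSeries.derivativeFun g := by
    rw [PowerSeries.smul_eq_C_mul]
    apply mul_right_cancel₀ hgne
    linear_combination v * hu' +
      (PowerSeries.C (1 / lam) * PowerSeries.derivativeFun g) * huvg
  have hog : opSubst g p = (1 : ℂ) • p + (lam * a) • derivative p +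
      (lam * b) • derivative (derivative p) := by
    refine ShefferAux.opSubst_of_coeffs g _ _ _ ?_ ?_ ?_ ?_ p
    · rw [hc]; norm_num
    · rw [hc]; norm_num
    · rw [hc]; norm_num
    · intro k hk
      rw [hc]
      have h0 : ¬ k = 0 := by omega
      have h1 : ¬ k = 1 := by omega
      have h2 : ¬ k = 2 := by omega
      rw [if_neg h0, if_neg h1, if_neg h2]
  have hog' : opSubst (PowerSeries.derivativeFun g) p = (lam * a) • p +
      (lam * b * 2) • derivative p + (0 : ℂ) • derivative (derivative p) := by
    refine ShefferAux.opSubst_of_coeffs _ _ _ _ ?_ ?_ ?_ ?_ p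
    · rw [ShefferAux.coeff_derivativeFun', hc]; norm_num
    · rw [ShefferAux.coeff_derivativeFun', hc]; norm_num
    · rw [ShefferAux.coeff_derivativeFun', hc]; norm_num
    · intro k hk
      rw [ShefferAux.coeff_derivativeFun', hc]
      have h0 : ¬ k + 1 = 0 := by omega
      have h1 : ¬ k + 1 = 1 := by omega
      have h2 : ¬ k + 1 = 2 := by omega
      rw [if_neg h0, if_neg h1, if_neg h2, zero_mul]
  rw [ShefferAux.opSubst_commX, ShefferAux.opSubst_mul, ShefferAux.opSubst_mul, huvg, huv',
    ShefferAux.opSubst_smul, hog, hog']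
  simp only [smul_add, smul_smul, mul_add, mul_smul_comm, one_smul, zero_smul, add_zero]
  match_scalars <;> field_simp <;> ring
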